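/- arXiv:0803.1525 — 5 statements merged into one kernel-verified Lean document; each statement's English description precedes it below -/
import Mathlib

section
/- Let E be a finite-dimensional real inner product space of dimension d ≥ 1, let L : E → E be a linear map, and let 1 ≤ ℓ ≤ d. Then the supremum, over all linearly independent tuples (v_1, …, v_ℓ) of vectors of E, of the ratio vol(L v_1, …, L v_ℓ)/vol(v_1, …, v_ℓ) equals σ_1(L)⋯σ_ℓ(L); in particular vol(L v_1, …, L v_ℓ) ≤ σ_1(L)⋯σ_ℓ(L) · vol(v_1, …, v_ℓ) for every tuple (v_1, …, v_ℓ) of vectors of E. -/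
noncomputable section

/-- `σ : Fin d → ℝ` is the (decreasingly ordered) sequence of singular values of the
linear map `L` on the `d`-dimensional real inner product space `E`. -/
def IsSingularValues {E : Type*} [NormedAddCommGroup E] [InnerProductSpace ℝ E]
    [FiniteDimensional ℝ E] (d : ℕ) (L : E →ₗ[ℝ] E) (σ : Fin d → ℝ) : Prop :=
  Antitone σ ∧ (∀ i, 0 ≤ σ i) ∧
    ∃ b : OrthonormalBasis (Fin d) ℝ E,
      ∀ i, (LinearMap.adjoint L ∘ₗ L) (b i) = (σ i ^ 2 : ℝ) • b i

/-- The product `σ_1 ⋯ σ_ℓ` of the first `ℓ` singular values. -/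
def sigmaProd {d : ℕ} (σ : Fin d → ℝ) (ℓ : ℕ) : ℝ :=
  ∏ i ∈ Finset.univ.filter (fun i : Fin d => (i : ℕ) < ℓ), σ i

/-- The `ℓ`-dimensional volume `vol(v_1, …, v_ℓ) = sqrt(det G)` of the parallelepiped
spanned by `v_1, …, v_ℓ`, where `G` is the Gram matrix `G_{ij} = ⟨v_i, v_j⟩`. -/
def gramVol {E : Type*} [NormedAddCommGroup E] [InnerProductSpace ℝ E]
    {ℓ : ℕ} (v : Fin ℓ → E) : ℝ :=
  Real.sqrt (Matrix.det (Matrix.of fun i j : Fin ℓ => (inner ℝ (v i) (v j) : ℝ)))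

/-! The volume `gramVol v` is the norm of `v₁ ∧ ⋯ ∧ v_ℓ` in `⋀^ℓ E`, whose inner product is the
Gram determinant, and `L` acts there by `⋀^ℓ L`, whose adjoint is `⋀^ℓ L*`. If `b` is an
orthonormal eigenbasis of `L*L` with eigenvalues `σᵢ²`, the wedges `b_s` over the `ℓ`-subsets `s`
form an orthonormal eigenbasis of `⋀^ℓ (L*L)` with eigenvalues `∏_{i ∈ s} σᵢ²`; as `σ` is
decreasing, the largest is `(σ₁⋯σ_ℓ)²`, at `s = {1, …, ℓ}`. So `⋀^ℓ L` has operator norm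
`σ₁⋯σ_ℓ`, attained at `b₁ ∧ ⋯ ∧ b_ℓ`. -/

open Finset RealInnerProductSpace exteriorPower

theorem Fin.val_le_val_apply_of_strictMono {m n : ℕ} {f : Fin m → Fin n} (hf : StrictMono f)
    (i : Fin m) : (i : ℕ) ≤ f i := by
  rw [← Fin.card_Iio i, ← Fin.card_Iio (f i)]
  exact card_le_card_of_injOn f (fun j hj => by simpa using hf (by simpa using hj))
    hf.injective.injOn

theorem Fin.map_castLEEmb_univ {m n : ℕ} (h : m ≤ n) :
    univ.map (Fin.castLEEmb h) = univ.filter (fun i : Fin n => (i : ℕ) < m) := by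
  ext i
  simp only [mem_map, mem_univ, true_and, mem_filter, Fin.castLEEmb_apply]
  exact ⟨fun ⟨j, hj⟩ => hj ▸ j.isLt, fun hi => ⟨⟨i, hi⟩, rfl⟩⟩

theorem Finset.prod_eq_prod_orderEmbOfFin {α M : Type*} [LinearOrder α] [CommMonoid M]
    (s : Finset α) {k : ℕ} (h : s.card = k) (f : α → M) :
    ∏ i ∈ s, f i = ∏ i : Fin k, f (s.orderEmbOfFin h i) := by
  conv_lhs => rw [← s.map_orderEmbOfFin_univ h, prod_map]
  rfl

section sigmaProd

variable {d : ℕ} {σ : Fin d → ℝ}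

theorem sigmaProd_eq_prod_castLE {ℓ : ℕ} (h : ℓ ≤ d) :
    sigmaProd σ ℓ = ∏ i : Fin ℓ, σ (Fin.castLE h i) := by
  rw [sigmaProd, ← Fin.map_castLEEmb_univ h, prod_map]
  rfl

theorem prod_le_sigmaProd (hanti : Antitone σ) (hnonneg : ∀ i, 0 ≤ σ i) (s : Finset (Fin d)) :
    ∏ i ∈ s, σ i ≤ sigmaProd σ s.card := by
  rw [s.prod_eq_prod_orderEmbOfFin rfl,
    sigmaProd_eq_prod_castLE ((card_le_univ s).trans_eq (Fintype.card_fin d))]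
  exact prod_le_prod (fun _ _ => hnonneg _) fun i _ =>
    hanti (Fin.val_le_val_apply_of_strictMono (s.orderEmbOfFin rfl).strictMono i)

end sigmaProd

theorem exteriorPower.map_ιMulti_family_of_apply_eq_smul {R M : Type*} [CommRing R]
    [AddCommGroup M] [Module R M] {n : ℕ} {I : Type*} [LinearOrder I] {A : M →ₗ[R] M}
    {v : I → M} {μ : I → R} (hv : ∀ i, A (v i) = μ i • v i) (s : Set.powersetCard I n) :
    map n A (ιMulti_family R n v s) = (∏ i ∈ s.val, μ i) • ιMulti_family R n v s := by
  rw [map_apply_ιMulti_family]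
  simp only [ιMulti_family, Function.comp_def, hv]
  rw [AlternatingMap.map_smul_univ, s.val.prod_eq_prod_orderEmbOfFin (Set.powersetCard.card_eq s)]
  rfl

theorem OrthonormalBasis.inner_apply_self_le {ι F : Type*} [Fintype ι] [NormedAddCommGroup F]
    [InnerProductSpace ℝ F] (B : OrthonormalBasis ι ℝ F) {S : F →ₗ[ℝ] F} {μ : ι → ℝ}
    (hS : ∀ i, S (B i) = μ i • B i) {M : ℝ} (hμ : ∀ i, μ i ≤ M) (x : F) :
    ⟪x, S x⟫ ≤ M * ‖x‖ ^ 2 := by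
  have hSx : S x = ∑ i, (μ i * ⟪B i, x⟫) • B i := by
    conv_lhs => rw [← B.sum_repr' x]
    simp [map_sum, hS, smul_smul, mul_comm]
  calc ⟪x, S x⟫ = ∑ i, μ i * ⟪B i, x⟫ ^ 2 := by
        simp [hSx, inner_sum, real_inner_smul_right, real_inner_comm, sq, mul_assoc]
    _ ≤ ∑ i, M * ⟪B i, x⟫ ^ 2 := by gcongr with i; exact hμ i
    _ = M * ‖x‖ ^ 2 := by rw [← mul_sum, B.sum_sq_inner_right]

section InnerProductSpace

variable {E : Type*} [NormedAddCommGroup E] [InnerProductSpace ℝ E]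

theorem gramVol_pos {n : ℕ} {v : Fin n → E} (hv : LinearIndependent ℝ v) : 0 < gramVol v :=
  Real.sqrt_pos.2 (Matrix.posDef_gram_of_linearIndependent hv).det_pos

variable [FiniteDimensional ℝ E]

theorem exteriorPower.adjoint_map (n : ℕ) (A : E →ₗ[ℝ] E) :
    LinearMap.adjoint (map n A) = map n (LinearMap.adjoint A) := by
  symm
  rw [LinearMap.eq_adjoint_iff]
  suffices (innerₗ _).comp (map n (LinearMap.adjoint A)) = (innerₗ _).compl₂ (map n A) from
    fun x y => congr($this x y)
  ext u w
  simp [map_apply_ιMulti, inner_ιMulti_ιMulti, LinearMap.adjoint_inner_left]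

theorem exteriorPower.norm_map_sq {n : ℕ} (A : E →ₗ[ℝ] E) (ω : ⋀[ℝ]^n E) :
    ‖map n A ω‖ ^ 2 = ⟪ω, map n (LinearMap.adjoint A ∘ₗ A) ω⟫ := by
  rw [← real_inner_self_eq_norm_sq, map_comp, LinearMap.comp_apply, ← adjoint_map,
    LinearMap.adjoint_inner_right]

theorem gramVol_eq_norm_ιMulti {n : ℕ} (v : Fin n → E) : gramVol v = ‖ιMulti ℝ n v‖ := by
  rw [norm_eq_sqrt_real_inner, inner_ιMulti_self]
  rfl

theorem gramVol_apply_eq_norm_map {n : ℕ} (L : E →ₗ[ℝ] E) (v : Fin n → E) :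
    gramVol (fun i => L (v i)) = ‖map n L (ιMulti ℝ n v)‖ := by
  rw [map_apply_ιMulti, ← gramVol_eq_norm_ιMulti]
  rfl

theorem OrthonormalBasis.coe_exteriorPower {I : Type*} [Fintype I] [LinearOrder I]
    (b : OrthonormalBasis I ℝ E) (n : ℕ) : ⇑(b.exteriorPower n) = ιMulti_family ℝ n b := by
  rw [← OrthonormalBasis.coe_toBasis, OrthonormalBasis.toBasis_exteriorPower, coe_basis,
    OrthonormalBasis.coe_toBasis]

section SingularValues

variable {d : ℕ} {L : E →ₗ[ℝ] E} {σ : Fin d → ℝ} {b : OrthonormalBasis (Fin d) ℝ E}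

theorem map_adjoint_comp_self_exteriorPower_apply
    (hb : ∀ i, (LinearMap.adjoint L ∘ₗ L) (b i) = (σ i ^ 2 : ℝ) • b i) {n : ℕ}
    (s : Set.powersetCard (Fin d) n) :
    map n (LinearMap.adjoint L ∘ₗ L) (b.exteriorPower n s) =
      (∏ i ∈ s.val, σ i ^ 2) • b.exteriorPower n s := by
  rw [OrthonormalBasis.coe_exteriorPower]
  exact map_ιMulti_family_of_apply_eq_smul hb s

theorem norm_map_exteriorPower_apply
    (hb : ∀ i, (LinearMap.adjoint L ∘ₗ L) (b i) = (σ i ^ 2 : ℝ) • b i)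
    (hnonneg : ∀ i, 0 ≤ σ i) {n : ℕ} (s : Set.powersetCard (Fin d) n) :
    ‖map n L (b.exteriorPower n s)‖ = ∏ i ∈ s.val, σ i := by
  rw [← sq_eq_sq₀ (norm_nonneg _) (prod_nonneg fun i _ => hnonneg i), norm_map_sq,
    map_adjoint_comp_self_exteriorPower_apply hb, real_inner_smul_right,
    real_inner_self_eq_norm_sq, (b.exteriorPower n).norm_eq_one, one_pow, mul_one, prod_pow]

theorem norm_map_le_sigmaProd (hb : ∀ i, (LinearMap.adjoint L ∘ₗ L) (b i) = (σ i ^ 2 : ℝ) • b i)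
    (hanti : Antitone σ) (hnonneg : ∀ i, 0 ≤ σ i) {n : ℕ} (ω : ⋀[ℝ]^n E) :
    ‖map n L ω‖ ≤ sigmaProd σ n * ‖ω‖ := by
  have hP : 0 ≤ sigmaProd σ n := prod_nonneg fun i _ => hnonneg i
  rw [← pow_le_pow_iff_left₀ (norm_nonneg _) (mul_nonneg hP (norm_nonneg _)) two_ne_zero,
    mul_pow, norm_map_sq]
  refine (b.exteriorPower n).inner_apply_self_le (map_adjoint_comp_self_exteriorPower_apply hb)
    (fun s => ?_) ω
  rw [prod_pow]
  have := prod_le_sigmaProd hanti hnonneg s.val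
  rw [Set.powersetCard.card_eq s] at this
  exact pow_le_pow_left₀ (prod_nonneg fun i _ => hnonneg i) this 2

end SingularValues

variable {d n : ℕ} {L : E →ₗ[ℝ] E} {σ : Fin d → ℝ}

theorem gramVol_apply_le (hσ : IsSingularValues d L σ) (v : Fin n → E) :
    gramVol (fun i => L (v i)) ≤ sigmaProd σ n * gramVol v := by
  obtain ⟨hanti, hnonneg, b, hb⟩ := hσ
  rw [gramVol_apply_eq_norm_map, gramVol_eq_norm_ιMulti]
  exact norm_map_le_sigmaProd hb hanti hnonneg _

theorem exists_gramVol_eq_one_and_gramVol_apply_eq_sigmaProd (hσ : IsSingularValues d L σ)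
    (hn : n ≤ d) : ∃ v : Fin n → E, LinearIndependent ℝ v ∧ gramVol v = 1 ∧
      gramVol (fun i => L (v i)) = sigmaProd σ n := by
  obtain ⟨-, hnonneg, b, hb⟩ := hσ
  let s₀ : Set.powersetCard (Fin d) n := ⟨univ.filter (fun i : Fin d => (i : ℕ) < n), by
    simp [Set.powersetCard.mem_iff, ← Fin.map_castLEEmb_univ hn]⟩
  let e := Set.powersetCard.ofFinEmbEquiv.symm s₀
  have hs₀ : ιMulti ℝ n (b ∘ e) = b.exteriorPower n s₀ := by
    rw [OrthonormalBasis.coe_exteriorPower]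
    rfl
  refine ⟨b ∘ e, b.orthonormal.linearIndependent.comp _ e.injective, ?_, ?_⟩
  · rw [gramVol_eq_norm_ιMulti, hs₀, (b.exteriorPower n).norm_eq_one]
  · rw [gramVol_apply_eq_norm_map, hs₀, norm_map_exteriorPower_apply hb hnonneg]
    rfl

end InnerProductSpace

theorem volume_distortion_sup_eq_sigmaProd_general
    {E : Type*} [NormedAddCommGroup E] [InnerProductSpace ℝ E] [FiniteDimensional ℝ E]
    {d : ℕ} (L : E →ₗ[ℝ] E) (ℓ : ℕ) (hℓd : ℓ ≤ d)
    (σ : Fin d → ℝ) (hσ : IsSingularValues d L σ) :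
    sSup {r : ℝ | ∃ v : Fin ℓ → E, LinearIndependent ℝ v ∧
        r = gramVol (fun i => L (v i)) / gramVol v} = sigmaProd σ ℓ ∧
      ∀ v : Fin ℓ → E, gramVol (fun i => L (v i)) ≤ sigmaProd σ ℓ * gramVol v := by
  refine ⟨IsGreatest.csSup_eq ⟨?_, ?_⟩, gramVol_apply_le hσ⟩
  · obtain ⟨v, hv, hvol, hvolL⟩ := exists_gramVol_eq_one_and_gramVol_apply_eq_sigmaProd hσ hℓd
    exact ⟨v, hv, by rw [hvol, hvolL, div_one]⟩
  · rintro _ ⟨v, hv, rfl⟩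
    exact (div_le_iff₀ (gramVol_pos hv)).2 (gramVol_apply_le hσ v)

/-- For a linear map `L` on a `d`-dimensional real inner product space and `1 ≤ ℓ ≤ d`, the
supremum over linearly independent tuples `(v_1, …, v_ℓ)` of the volume distortion ratio
`vol(L v_1, …, L v_ℓ)/vol(v_1, …, v_ℓ)` equals `σ_1(L)⋯σ_ℓ(L)`; in particular
`vol(L v_1, …, L v_ℓ) ≤ σ_1(L)⋯σ_ℓ(L) · vol(v_1, …, v_ℓ)` for every tuple. -/
theorem volume_distortion_sup_eq_sigmaProd
    {E : Type*} [NormedAddCommGroup E] [InnerProductSpace ℝ E] [FiniteDimensional ℝ E]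
    {d : ℕ} (hd : 1 ≤ d) (hdim : Module.finrank ℝ E = d)
    (L : E →ₗ[ℝ] E) (ℓ : ℕ) (hℓ1 : 1 ≤ ℓ) (hℓd : ℓ ≤ d)
    (σ : Fin d → ℝ) (hσ : IsSingularValues d L σ) :
    sSup {r : ℝ | ∃ v : Fin ℓ → E, LinearIndependent ℝ v ∧
        r = gramVol (fun i => L (v i)) / gramVol v} = sigmaProd σ ℓ ∧
      ∀ v : Fin ℓ → E, gramVol (fun i => L (v i)) ≤ sigmaProd σ ℓ * gramVol v :=
  volume_distortion_sup_eq_sigmaProd_general L ℓ hℓd σ hσ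
end
end

section
/- Let (X, d) be a compact metric space, f : X → X continuous, and let Ψ = (ψ_n)_{n≥1} be a super-additive sequence with respect to f of continuous functions ψ_n : X → ℝ. Then for every n ≥ 1, P_f(ψ_1) ≤ P_f((1/n)·ψ_n). -/
noncomputable section

/-- A finite set `F ⊆ X` is `(n, ε)`-separated for `f` if any two distinct points of `F`
are at distance `> ε` at some time `0 ≤ k < n` of their orbits. -/
def IsSeparatedSet {X : Type*} [MetricSpace X] (f : X → X) (n : ℕ) (ε : ℝ)
    (F : Finset X) : Prop :=
  ∀ x ∈ F, ∀ y ∈ F, x ≠ y → ∃ k < n, ε < dist (f^[k] x) (f^[k] y)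

/-- `limsup_{n→∞} (1/n) log sup { Σ_{x∈F} exp(S_n φ(x)) : F (n,ε)-separated }`. -/
def presApprox {X : Type*} [MetricSpace X] (f : X → X) (φ : X → ℝ) (ε : ℝ) : EReal :=
  Filter.limsup (fun n : ℕ =>
    (((n : ℝ)⁻¹ * Real.log (sSup {s : ℝ | ∃ F : Finset X, IsSeparatedSet f n ε F ∧
      s = ∑ x ∈ F, Real.exp (∑ k ∈ Finset.range n, φ (f^[k] x))}) : ℝ) : EReal))
    Filter.atTop

/-- The topological pressure `P_f(φ)`, the limit as `ε → 0` (equivalently, by monotonicity,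
the supremum over `ε > 0`) of `presApprox f φ ε`. -/
def topPressure {X : Type*} [MetricSpace X] (f : X → X) (φ : X → ℝ) : EReal :=
  ⨆ (ε : ℝ) (_ : 0 < ε), presApprox f φ ε

/-!
Super-additivity gives `S_n ψ₁ ≤ ψ_n` along every orbit. Averaging `S_m ψ₁(x)` over the `n`
shifted windows `S_m ψ₁(fᵏ x)`, `k < n`, each of which differs from it by at most `2n‖ψ₁‖`, and
regrouping the resulting double sum into blocks of length `n` yields
`S_m ψ₁ ≤ S_m (ψ_n / n) + 2n‖ψ₁‖` uniformly in `m` and `x`. An error in the Birkhoff sums that is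
bounded uniformly in `m` changes every partition function by a bounded factor, which disappears
after taking `(1/m) log` and letting `m → ∞`.
-/

open Filter Finset Metric Real Function Topology

section BirkhoffSum

variable {X : Type*} {f : X → X}

theorem sum_birkhoffSum_iterate_comm {M : Type*} [AddCommMonoid M] (g : X → M) (m n : ℕ)
    (x : X) :
    ∑ j ∈ range m, birkhoffSum f g n (f^[j] x) = ∑ k ∈ range n, birkhoffSum f g m (f^[k] x) := by
  simp only [birkhoffSum, ← iterate_add_apply]
  rw [sum_comm]
  simp only [add_comm]

theorem birkhoffSum_le_of_le {g : X → ℝ} {M : ℝ} (hg : ∀ x, g x ≤ M) (n : ℕ) (x : X) :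
    birkhoffSum f g n x ≤ n * M := by
  simpa [birkhoffSum] using sum_le_card_nsmul (range n) _ M fun k _ => hg (f^[k] x)

theorem abs_birkhoffSum_le {g : X → ℝ} {M : ℝ} (hg : ∀ x, |g x| ≤ M) (n : ℕ) (x : X) :
    |birkhoffSum f g n x| ≤ n * M :=
  (abs_sum_le_sum_abs _ _).trans (birkhoffSum_le_of_le (g := fun x => |g x|) hg n x)

theorem birkhoffSum_le_birkhoffSum_iterate_add {g : X → ℝ} {M : ℝ} (hg : ∀ x, |g x| ≤ M)
    (m k : ℕ) (x : X) :
    birkhoffSum f g m x ≤ birkhoffSum f g m (f^[k] x) + 2 * k * M := by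
  have hsplit : birkhoffSum f g m x + birkhoffSum f g k (f^[m] x) =
      birkhoffSum f g k x + birkhoffSum f g m (f^[k] x) := by
    rw [← birkhoffSum_add, ← birkhoffSum_add, add_comm]
  have h₁ := abs_le.1 (abs_birkhoffSum_le (f := f) hg k x)
  have h₂ := abs_le.1 (abs_birkhoffSum_le (f := f) hg k (f^[m] x))
  linarith [h₁.2, h₂.1]

theorem mul_birkhoffSum_le {g : X → ℝ} {M : ℝ} (hg : ∀ x, |g x| ≤ M) (m n : ℕ) (x : X) :
    n * birkhoffSum f g m x ≤ ∑ j ∈ range m, birkhoffSum f g n (f^[j] x) + 2 * n * n * M := by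
  have hM : 0 ≤ M := (abs_nonneg _).trans (hg x)
  have hshift : ∀ k ∈ range n,
      birkhoffSum f g m x - 2 * n * M ≤ birkhoffSum f g m (f^[k] x) := fun k hk => by
    have hkn : (k : ℝ) ≤ n := by exact_mod_cast (mem_range.1 hk).le
    nlinarith [birkhoffSum_le_birkhoffSum_iterate_add (f := f) hg m k x]
  have := sum_le_sum hshift
  rw [sum_const, card_range, nsmul_eq_mul, ← sum_birkhoffSum_iterate_comm] at this
  linarith

theorem birkhoffSum_le_of_superadditive {ψ : ℕ → X → ℝ}
    (hsa : ∀ n, 1 ≤ n → ∀ m, 1 ≤ m → ∀ x, ψ n x + ψ m (f^[n] x) ≤ ψ (n + m) x)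
    {p : ℕ} (hp : 1 ≤ p) (x : X) : birkhoffSum f (ψ 1) p x ≤ ψ p x := by
  induction p, hp using Nat.le_induction with
  | base => simp
  | succ p hp ih =>
    rw [birkhoffSum_succ]
    linarith [hsa p hp 1 le_rfl x]

theorem birkhoffSum_le_add_birkhoffSum_of_superadditive {ψ : ℕ → X → ℝ}
    (hsa : ∀ n, 1 ≤ n → ∀ m, 1 ≤ m → ∀ x, ψ n x + ψ m (f^[n] x) ≤ ψ (n + m) x)
    {M : ℝ} (hM : ∀ x, |ψ 1 x| ≤ M) {n : ℕ} (hn : 1 ≤ n) (m : ℕ) (x : X) :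
    birkhoffSum f (ψ 1) m x ≤ 2 * n * M + birkhoffSum f (fun y => (n : ℝ)⁻¹ * ψ n y) m x := by
  have hn₀ : (0 : ℝ) < n := by exact_mod_cast hn
  have hsum : ∑ j ∈ range m, birkhoffSum f (ψ 1) n (f^[j] x) ≤ birkhoffSum f (ψ n) m x :=
    sum_le_sum fun j _ => birkhoffSum_le_of_superadditive hsa hn _
  have hdiv : birkhoffSum f (fun y => (n : ℝ)⁻¹ * ψ n y) m x =
      (n : ℝ)⁻¹ * birkhoffSum f (ψ n) m x :=
    (mul_sum _ _ _).symm
  rw [hdiv, ← mul_le_mul_iff_of_pos_left hn₀, mul_add, mul_inv_cancel_left₀ hn₀.ne']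
  linarith [mul_birkhoffSum_le (f := f) hM m n x]

end BirkhoffSum

theorem limsup_coe_le_limsup_coe_of_le_add {ι : Type*} {l : Filter ι} [l.NeBot]
    {u v w : ι → ℝ} (huv : ∀ i, u i ≤ v i + w i) (hw : Tendsto w l (𝓝 0)) :
    limsup (fun i => (u i : EReal)) l ≤ limsup (fun i => (v i : EReal)) l := by
  have hw₀ : limsup (fun i => (w i : EReal)) l = 0 :=
    (EReal.tendsto_coe.2 hw).limsup_eq
  calc limsup (fun i => (u i : EReal)) l
      ≤ limsup ((fun i => (v i : EReal)) + fun i => (w i : EReal)) l :=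
        limsup_le_limsup (.of_forall fun i => EReal.coe_le_coe_iff.2 (huv i))
    _ ≤ limsup (fun i => (v i : EReal)) l + limsup (fun i => (w i : EReal)) l :=
        EReal.limsup_add_le (.inr (by simp [hw₀])) (.inr (by simp [hw₀]))
    _ = limsup (fun i => (v i : EReal)) l := by rw [hw₀, add_zero]

section Pressure

variable {X : Type*} [MetricSpace X] {f : X → X}

def separatedSums (f : X → X) (φ : X → ℝ) (n : ℕ) (ε : ℝ) : Set ℝ :=
  {s | ∃ F : Finset X, IsSeparatedSet f n ε F ∧ s = ∑ x ∈ F, exp (birkhoffSum f φ n x)}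

theorem presApprox_eq (f : X → X) (φ : X → ℝ) (ε : ℝ) :
    presApprox f φ ε =
      limsup (fun n : ℕ => (((n : ℝ)⁻¹ * log (sSup (separatedSums f φ n ε)) : ℝ) : EReal))
        atTop :=
  rfl

theorem zero_mem_separatedSums (φ : X → ℝ) (n : ℕ) (ε : ℝ) : 0 ∈ separatedSums f φ n ε :=
  ⟨∅, fun _ hx => absurd hx (notMem_empty _), by simp⟩

/-- A separated set injects into the itineraries through a fixed finite `ε / 2`-net. -/
theorem exists_card_le_of_isSeparatedSet [CompactSpace X] (f : X → X) (n : ℕ) {ε : ℝ}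
    (hε : 0 < ε) : ∃ N : ℕ, ∀ F, IsSeparatedSet f n ε F → F.card ≤ N := by
  classical
  obtain ⟨t, -, ht⟩ := isCompact_univ.elim_nhds_subcover (fun y : X => ball y (ε / 2))
    fun y _ => ball_mem_nhds y (half_pos hε)
  have hcenter : ∀ x : X, ∃ y ∈ t, dist x y < ε / 2 := fun x => by
    simpa using ht (Set.mem_univ x)
  choose c hct hcx using hcenter
  refine ⟨(Fintype.piFinset fun _ : Fin n => t).card, fun F hF => ?_⟩
  refine card_le_card_of_injOn (fun x (i : Fin n) => c (f^[i] x))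
    (fun x _ => Fintype.mem_piFinset.2 fun i => hct _) fun x hx y hy hxy => ?_
  by_contra hne
  obtain ⟨k, hk, hsep⟩ := hF x hx y hy hne
  have hck : c (f^[k] x) = c (f^[k] y) := congrFun hxy ⟨k, hk⟩
  have := dist_triangle_right (f^[k] x) (f^[k] y) (c (f^[k] x))
  linarith [hcx (f^[k] x), hck ▸ hcx (f^[k] y)]

theorem bddAbove_separatedSums [CompactSpace X] (f : X → X) {φ : X → ℝ}
    (hφ : BddAbove (Set.range φ)) (n : ℕ) {ε : ℝ} (hε : 0 < ε) :
    BddAbove (separatedSums f φ n ε) := by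
  obtain ⟨M, hM⟩ := hφ
  obtain ⟨N, hN⟩ := exists_card_le_of_isSeparatedSet f n hε
  refine ⟨N * exp (n * M), ?_⟩
  rintro _ ⟨F, hF, rfl⟩
  calc ∑ x ∈ F, exp (birkhoffSum f φ n x) ≤ F.card • exp (n * M) :=
        sum_le_card_nsmul _ _ _ fun x _ =>
          exp_le_exp.2 (birkhoffSum_le_of_le (fun x => hM (Set.mem_range_self x)) n x)
    _ ≤ N * exp (n * M) := by
        rw [nsmul_eq_mul]
        gcongr
        exact_mod_cast hN F hF

theorem le_exp_mul_sSup_separatedSums {φ χ : X → ℝ} {n : ℕ} {C ε : ℝ}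
    (hφχ : ∀ x, birkhoffSum f φ n x ≤ C + birkhoffSum f χ n x)
    (hχ : BddAbove (separatedSums f χ n ε)) :
    ∀ s ∈ separatedSums f φ n ε, s ≤ exp C * sSup (separatedSums f χ n ε) := by
  rintro _ ⟨F, hF, rfl⟩
  calc ∑ x ∈ F, exp (birkhoffSum f φ n x) ≤ ∑ x ∈ F, exp C * exp (birkhoffSum f χ n x) :=
        sum_le_sum fun x _ => by rw [← exp_add]; exact exp_le_exp.2 (hφχ x)
    _ ≤ exp C * sSup (separatedSums f χ n ε) := by
        rw [← mul_sum]
        gcongr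
        exact le_csSup hχ ⟨F, hF, rfl⟩

theorem log_sSup_separatedSums_le_add [Nonempty X] {φ χ : X → ℝ} {n : ℕ} {C ε : ℝ}
    (hφχ : ∀ x, birkhoffSum f φ n x ≤ C + birkhoffSum f χ n x)
    (hχ : BddAbove (separatedSums f χ n ε)) :
    log (sSup (separatedSums f φ n ε)) ≤ C + log (sSup (separatedSums f χ n ε)) := by
  obtain ⟨x₀⟩ := ‹Nonempty X›
  have hbound := le_exp_mul_sSup_separatedSums hφχ hχ
  have hpos : 0 < sSup (separatedSums f φ n ε) :=
    (exp_pos (birkhoffSum f φ n x₀)).trans_le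
      (le_csSup ⟨_, hbound⟩ ⟨{x₀}, by simp [IsSeparatedSet], by simp⟩)
  have hle := csSup_le ⟨0, zero_mem_separatedSums φ n ε⟩ hbound
  have hχpos := pos_of_mul_pos_right (hpos.trans_le hle) (exp_pos C).le
  rw [← log_exp C, ← log_mul (exp_ne_zero C) hχpos.ne']
  exact log_le_log hpos hle

theorem presApprox_le_presApprox_of_birkhoffSum_le_add [CompactSpace X] {φ χ : X → ℝ} {C : ℝ}
    (hφχ : ∀ n x, birkhoffSum f φ n x ≤ C + birkhoffSum f χ n x)
    (hχ : BddAbove (Set.range χ)) {ε : ℝ} (hε : 0 < ε) :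
    presApprox f φ ε ≤ presApprox f χ ε := by
  rcases isEmpty_or_nonempty X with hX | hX
  · rw [Subsingleton.elim φ χ]
  rw [presApprox_eq, presApprox_eq]
  refine limsup_coe_le_limsup_coe_of_le_add (w := fun n : ℕ => (n : ℝ)⁻¹ * C) (fun n => ?_)
    (by simpa using tendsto_inv_atTop_nhds_zero_nat.mul_const C)
  calc (n : ℝ)⁻¹ * log (sSup (separatedSums f φ n ε))
      ≤ (n : ℝ)⁻¹ * (C + log (sSup (separatedSums f χ n ε))) := by
        gcongr
        exact log_sSup_separatedSums_le_add (hφχ n) (bddAbove_separatedSums f hχ n hε)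
    _ = (n : ℝ)⁻¹ * log (sSup (separatedSums f χ n ε)) + (n : ℝ)⁻¹ * C := by ring

theorem topPressure_le_topPressure_of_birkhoffSum_le_add [CompactSpace X] {φ χ : X → ℝ} {C : ℝ}
    (hφχ : ∀ n x, birkhoffSum f φ n x ≤ C + birkhoffSum f χ n x)
    (hχ : BddAbove (Set.range χ)) :
    topPressure f φ ≤ topPressure f χ :=
  iSup₂_mono fun _ hε => presApprox_le_presApprox_of_birkhoffSum_le_add hφχ hχ hε

end Pressure

theorem pressure_le_pressure_div_general
    {X : Type*} [MetricSpace X] [CompactSpace X]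
    (f : X → X)
    (ψ : ℕ → X → ℝ) (hcont : ∀ n, 1 ≤ n → Continuous (ψ n))
    (hsa : ∀ n, 1 ≤ n → ∀ m, 1 ≤ m → ∀ x : X,
      ψ n x + ψ m (f^[n] x) ≤ ψ (n + m) x)
    (n : ℕ) (hn : 1 ≤ n) :
    topPressure f (ψ 1) ≤ topPressure f (fun x => (n : ℝ)⁻¹ * ψ n x) := by
  let ψ₁ : BoundedContinuousFunction X ℝ :=
    .mkOfCompact ⟨ψ 1, hcont 1 le_rfl⟩
  have hψ₁ : ∀ x, |ψ 1 x| ≤ ‖ψ₁‖ := fun x => ψ₁.norm_coe_le_norm x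
  exact topPressure_le_topPressure_of_birkhoffSum_le_add
    (birkhoffSum_le_add_birkhoffSum_of_superadditive hsa hψ₁ hn)
    (isCompact_range (continuous_const.mul (hcont n hn))).bddAbove

/-- For a continuous map `f` of a compact metric space and a super-additive sequence
`(ψ_n)_{n≥1}` of continuous functions, `P_f(ψ_1) ≤ P_f((1/n)·ψ_n)` for every `n ≥ 1`. -/
theorem pressure_le_pressure_div
    {X : Type*} [MetricSpace X] [CompactSpace X]
    (f : X → X) (hf : Continuous f)
    (ψ : ℕ → X → ℝ) (hcont : ∀ n, 1 ≤ n → Continuous (ψ n))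
    (hsa : ∀ n, 1 ≤ n → ∀ m, 1 ≤ m → ∀ x : X,
      ψ n x + ψ m (f^[n] x) ≤ ψ (n + m) x)
    (n : ℕ) (hn : 1 ≤ n) :
    topPressure f (ψ 1) ≤ topPressure f (fun x => (n : ℝ)⁻¹ * ψ n x) :=
  pressure_le_pressure_div_general f ψ hcont hsa n hn
end
end

section
/- Let (X, d) be a compact metric space, f : X → X continuous, let Ψ = (ψ_n)_{n≥1} be a super-additive sequence with respect to f of continuous functions ψ_n : X → ℝ, and fix n ≥ 1. Then there exists a constant C ≥ 0 such that for every x ∈ X and every N ≥ 1, n·ψ_N(x) ≥ Σ_{k=0}^{N−1} ψ_n(f^k(x)) − C. -/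
/-- For a continuous map `f` of a compact metric space, a super-additive sequence
`(ψ_n)_{n≥1}` of continuous functions and a fixed `n ≥ 1`, there is `C ≥ 0` such that
`n·ψ_N(x) ≥ Σ_{k=0}^{N−1} ψ_n(f^k(x)) − C` for all `x` and `N ≥ 1`. -/
theorem psi_N_ge_birkhoff_sum_sub_const
    {X : Type*} [MetricSpace X] [CompactSpace X]
    (f : X → X) (hf : Continuous f)
    (ψ : ℕ → X → ℝ) (hcont : ∀ n, 1 ≤ n → Continuous (ψ n))
    (hsa : ∀ n, 1 ≤ n → ∀ m, 1 ≤ m → ∀ x : X,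
      ψ n x + ψ m (f^[n] x) ≤ ψ (n + m) x)
    (n : ℕ) (hn : 1 ≤ n) :
    ∃ C : ℝ, 0 ≤ C ∧ ∀ x : X, ∀ N : ℕ, 1 ≤ N →
      (∑ k ∈ Finset.range N, ψ n (f^[k] x)) - C ≤ (n : ℝ) * ψ N x := by
  rcases isEmpty_or_nonempty X with hX | hX
  · exact ⟨0, le_refl 0, fun x => (IsEmpty.false x).elim⟩
  -- uniform bound K on |ψ k| for 1 ≤ k ≤ 3n
  set g : X → ℝ := fun x => ∑ k ∈ Finset.Icc 1 (3 * n), |ψ k x| with hg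
  have hgc : Continuous g := by
    apply continuous_finset_sum
    intro k hk
    exact (hcont k (Finset.mem_Icc.mp hk).1).abs
  obtain ⟨x0, -, hx0⟩ := isCompact_univ.exists_isMaxOn Set.univ_nonempty hgc.continuousOn
  set K := g x0 with hKdef
  have hK0 : 0 ≤ K := Finset.sum_nonneg fun _ _ => abs_nonneg _
  have hK : ∀ k, 1 ≤ k → k ≤ 3 * n → ∀ x, |ψ k x| ≤ K := by
    intro k hk1 hk2 x
    calc |ψ k x| ≤ g x :=
          Finset.single_le_sum (f := fun k => |ψ k x|) (fun _ _ => abs_nonneg _)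
            (Finset.mem_Icc.mpr ⟨hk1, hk2⟩)
      _ ≤ K := hx0 (Set.mem_univ x)
  -- block super-additivity
  have block : ∀ q, 1 ≤ q → ∀ x, (∑ i ∈ Finset.range q, ψ n (f^[i * n] x)) ≤ ψ (q * n) x := by
    intro q hq
    induction q with
    | zero => omega
    | succ q ih =>
      intro x
      rcases Nat.eq_zero_or_pos q with h0 | hq'
      · subst h0; simp
      · rw [Finset.sum_range_succ]
        have h1 : ψ (q * n) x + ψ n (f^[q * n] x) ≤ ψ (q * n + n) x :=
          hsa (q * n) (le_trans hn (Nat.le_mul_of_pos_left n hq')) n hn x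
        have h2 : (q + 1) * n = q * n + n := by ring
        rw [h2]
        linarith [ih hq' x]
  -- reindexing
  have reindex : ∀ q : ℕ, ∀ x, (∑ k ∈ Finset.range (q * n), ψ n (f^[k] x))
      = ∑ j ∈ Finset.range n, ∑ i ∈ Finset.range q, ψ n (f^[j + i * n] x) := by
    intro q x
    induction q with
    | zero => simp
    | succ q ih =>
      have h2 : (q + 1) * n = q * n + n := by ring
      rw [h2, ← Finset.sum_range_add_sum_Ico _ (Nat.le_add_right (q * n) n), ih,
        Finset.sum_Ico_eq_sum_range]
      simp only [Nat.add_sub_cancel_left, Finset.sum_range_succ, Finset.sum_add_distrib]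
      congr 1
      apply Finset.sum_congr rfl
      intro j _
      rw [add_comm (q * n) j]
  refine ⟨5 * n * K, by positivity, fun x N hN => ?_⟩
  rcases lt_or_ge N (3 * n) with hsmall | hbig
  · -- small N
    have h1 : (∑ k ∈ Finset.range N, ψ n (f^[k] x)) ≤ N * K := by
      calc (∑ k ∈ Finset.range N, ψ n (f^[k] x)) ≤ ∑ k ∈ Finset.range N, K :=
            Finset.sum_le_sum fun k _ => le_trans (le_abs_self _)
              (hK n hn (by omega) _)
        _ = N * K := by rw [Finset.sum_const, Finset.card_range, nsmul_eq_mul]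
    have h2 : -K ≤ ψ N x := neg_le_of_abs_le (hK N hN (by omega) x)
    have hNle : (N : ℝ) ≤ 3 * n := by exact_mod_cast hsmall.le
    have hn1 : (1 : ℝ) ≤ n := by exact_mod_cast hn
    nlinarith
  · -- large N : N ≥ 3n
    set q := N / n - 2 with hqdef
    have hdiv3 : 3 ≤ N / n := (Nat.le_div_iff_mul_le (by omega)).mpr (by omega)
    have hq1 : 1 ≤ q := by omega
    have hq2 : q + 2 = N / n := by omega
    have hqn2 : q * n + 2 * n ≤ N := by
      have : (q + 2) * n ≤ N := by
        rw [hq2]; exact Nat.div_mul_le_self N n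
      nlinarith
    have hqn3 : N < q * n + 3 * n := by
      have h1 := Nat.div_add_mod N n
      have h2 : N % n < n := Nat.mod_lt _ (by omega)
      have : N < (N / n + 1) * n := by nlinarith
      have h3 : (q + 3) * n = (N / n + 1) * n := by rw [← hq2]
      nlinarith
    -- per-residue estimate
    have main_j : ∀ j ∈ Finset.range n,
        (∑ i ∈ Finset.range q, ψ n (f^[j + i * n] x)) ≤ ψ N x + 2 * K := by
      intro j hj
      have hjn : j < n := Finset.mem_range.mp hj
      set r : ℕ := N - j - q * n with hrdef
      have hr1 : 1 ≤ r := by omega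
      have hr3 : r ≤ 3 * n := by omega
      have hrK : ∀ y, -K ≤ ψ r y := fun y => neg_le_of_abs_le (hK r hr1 hr3 y)
      have hsum : (∑ i ∈ Finset.range q, ψ n (f^[j + i * n] x))
          ≤ ψ (q * n) (f^[j] x) := by
        have := block q hq1 (f^[j] x)
        calc (∑ i ∈ Finset.range q, ψ n (f^[j + i * n] x))
            = ∑ i ∈ Finset.range q, ψ n (f^[i * n] (f^[j] x)) := by
              apply Finset.sum_congr rfl
              intro i _
              rw [← Function.iterate_add_apply, Nat.add_comm]
          _ ≤ ψ (q * n) (f^[j] x) := this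
      have hqn1 : 1 ≤ q * n := by nlinarith
      have step2 : ψ (q * n) (f^[j] x) + ψ r (f^[q * n] (f^[j] x)) ≤ ψ (N - j) (f^[j] x) := by
        have := hsa (q * n) hqn1 r hr1 (f^[j] x)
        have heq : q * n + r = N - j := by omega
        rwa [heq] at this
      rcases Nat.eq_zero_or_pos j with h0 | hjpos
      · subst h0
        simp only [Function.iterate_zero_apply, Nat.sub_zero, zero_add] at step2 hsum ⊢
        have := hrK (f^[q * n] x)
        linarith [hsum]
      · have step1 : ψ j x + ψ (N - j) (f^[j] x) ≤ ψ N x := by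
          have := hsa j hjpos (N - j) (by omega) x
          have heq : j + (N - j) = N := by omega
          rwa [heq] at this
        have hjK : -K ≤ ψ j x := neg_le_of_abs_le (hK j hjpos (by omega) x)
        have := hrK (f^[q * n] (f^[j] x))
        linarith [hsum]
    -- sum over residues
    have hmain : (∑ k ∈ Finset.range (q * n), ψ n (f^[k] x))
        ≤ n * ψ N x + 2 * n * K := by
      rw [reindex q x]
      calc (∑ j ∈ Finset.range n, ∑ i ∈ Finset.range q, ψ n (f^[j + i * n] x))
          ≤ ∑ j ∈ Finset.range n, (ψ N x + 2 * K) := Finset.sum_le_sum main_j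
        _ = n * ψ N x + 2 * n * K := by
            rw [Finset.sum_const, Finset.card_range, nsmul_eq_mul]; ring
    -- tail
    have htail : (∑ k ∈ Finset.Ico (q * n) N, ψ n (f^[k] x)) ≤ 3 * n * K := by
      calc (∑ k ∈ Finset.Ico (q * n) N, ψ n (f^[k] x))
          ≤ ∑ k ∈ Finset.Ico (q * n) N, K :=
            Finset.sum_le_sum fun k _ => le_trans (le_abs_self _) (hK n hn (by omega) _)
        _ = ((N - q * n : ℕ) : ℝ) * K := by
            rw [Finset.sum_const, Nat.card_Ico, nsmul_eq_mul]
        _ ≤ ((3 * n : ℕ) : ℝ) * K :=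
            mul_le_mul_of_nonneg_right (Nat.cast_le.mpr (by omega)) hK0
        _ = 3 * n * K := by push_cast; ring
    have hsplit : (∑ k ∈ Finset.range N, ψ n (f^[k] x))
        = (∑ k ∈ Finset.range (q * n), ψ n (f^[k] x))
          + ∑ k ∈ Finset.Ico (q * n) N, ψ n (f^[k] x) :=
      (Finset.sum_range_add_sum_Ico _ (by omega)).symm
    rw [hsplit]
    linarith
end

section
/- Let (X, d) be a compact metric space, f : X → X continuous, let Ψ = (ψ_n)_{n≥1} be a super-additive sequence with respect to f of continuous functions ψ_n : X → ℝ, and fix n ≥ 1. Then for every sequence (F_N)_{N≥1} of nonempty finite subsets of X: limsup_{N→∞} (1/N) log Σ_{x∈F_N} exp(S_Nψ_1(x)) ≤ limsup_{N→∞} (1/N) log Σ_{x∈F_N} exp((1/n)·S_Nψ_n(x)) ≤ limsup_{N→∞} (1/N) log Σ_{x∈F_N} exp(ψ_N(x)), where S_Nφ := Σ_{k=0}^{N−1} φ∘f^k. -/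
open Filter Finset Real

lemma auxBound {s : Finset ℕ} {g : ℕ → ℝ} {M : ℝ} (h : ∀ k ∈ s, |g k| ≤ M) :
    |∑ k ∈ s, g k| ≤ s.card * M :=
  (Finset.abs_sum_le_sum_abs _ _).trans (by
    calc ∑ k ∈ s, |g k| ≤ ∑ k ∈ s, M := Finset.sum_le_sum h
      _ = s.card * M := by rw [Finset.sum_const, nsmul_eq_mul])

lemma auxA {X : Type*} (f : X → X) (ψ : ℕ → X → ℝ)
    (hsa : ∀ n, 1 ≤ n → ∀ m, 1 ≤ m → ∀ x : X, ψ n x + ψ m (f^[n] x) ≤ ψ (n+m) x) :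
    ∀ m, 1 ≤ m → ∀ x, ∑ j ∈ Finset.range m, ψ 1 (f^[j] x) ≤ ψ m x := by
  intro m
  induction m with
  | zero => intro h; exact absurd h (by omega)
  | succ m ih =>
    intro _ x
    rcases Nat.eq_zero_or_pos m with rfl | hm
    · simp
    · rw [Finset.sum_range_succ]
      have h1 := hsa m hm 1 le_rfl x
      have h2 := ih hm x
      linarith

lemma auxE {X : Type*} (f : X → X) (ψ : ℕ → X → ℝ) (n : ℕ) (hn : 1 ≤ n) (M : ℝ)
    (hM0 : 0 ≤ M) (hM : ∀ j, 1 ≤ j → j ≤ n → ∀ x, |ψ j x| ≤ M)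
    (hsa : ∀ n, 1 ≤ n → ∀ m, 1 ≤ m → ∀ x : X, ψ n x + ψ m (f^[n] x) ≤ ψ (n+m) x) :
    ∀ m, 1 ≤ m → ∀ y, ∑ j ∈ Finset.range (m / n), ψ n (f^[j*n] y) ≤ ψ m y + M := by
  intro m
  induction m using Nat.strong_induction_on with
  | _ m ih =>
    intro hm y
    rcases lt_or_ge m n with h | h
    · rw [Nat.div_eq_of_lt h]
      simp only [Finset.range_zero, Finset.sum_empty]
      have := hM m hm (le_of_lt h) y
      have := abs_le.mp this
      linarith [this.1]
    · rcases eq_or_lt_of_le h with he | hlt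
      · subst he
        rw [Nat.div_self (by omega)]
        simp [Function.iterate_zero_apply]
        linarith
      · have hmn : 1 ≤ m - n := by omega
        have hdiv : m / n = (m - n) / n + 1 := by
          conv_lhs => rw [← Nat.sub_add_cancel h]
          rw [Nat.add_div_right _ (by omega)]
        rw [hdiv, Finset.sum_range_succ']
        have hrw : ∀ j : ℕ, ψ n (f^[(j+1)*n] y) = ψ n (f^[j*n] (f^[n] y)) := by
          intro j
          rw [add_mul, one_mul, Function.iterate_add_apply]
        have hih := ih (m - n) (by omega) hmn (f^[n] y)
        have hs := hsa n hn (m - n) hmn y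
        rw [Nat.add_sub_cancel' h] at hs
        calc ∑ j ∈ Finset.range ((m-n)/n), ψ n (f^[(j+1)*n] y) + ψ n (f^[0*n] y)
            = ∑ j ∈ Finset.range ((m-n)/n), ψ n (f^[j*n] (f^[n] y)) + ψ n y := by
              simp only [hrw, zero_mul, Function.iterate_zero_apply]
          _ ≤ (ψ (m-n) (f^[n] y) + M) + ψ n y := by linarith
          _ ≤ ψ m y + M := by linarith

lemma auxBij (g : ℕ → ℝ) (n N : ℕ) (hn : 1 ≤ n) (hN : n ≤ N) :
    ∑ k ∈ Finset.range (N - n + 1), g k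
      = ∑ i ∈ Finset.range n, ∑ j ∈ Finset.range ((N - i) / n), g (i + j * n) := by
  rw [Finset.sum_sigma']
  have hn0 : 0 < n := hn
  refine Finset.sum_nbij' (fun k => (⟨k % n, k / n⟩ : (_ : ℕ) × ℕ))
    (fun p => p.1 + p.2 * n) ?_ ?_ ?_ ?_ ?_
  · intro k hk
    rw [Finset.mem_range] at hk
    show (⟨k % n, k / n⟩ : (_ : ℕ) × ℕ) ∈ (Finset.range n).sigma
      (fun i => Finset.range ((N - i) / n))
    rw [Finset.mem_sigma, Finset.mem_range, Finset.mem_range]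
    refine ⟨Nat.mod_lt _ hn0, ?_⟩
    have h3 : (k / n + 1) * n ≤ N - k % n := by
      have hdm := Nat.mod_add_div' k n
      have h5 : k % n < n := Nat.mod_lt _ hn0
      rw [add_mul, one_mul]
      generalize k / n * n = A at *
      omega
    have h6 := (Nat.le_div_iff_mul_le hn0).mpr h3
    show k / n < (N - k % n) / n
    omega
  · rintro ⟨p1, p2⟩ hp
    rw [Finset.mem_sigma, Finset.mem_range, Finset.mem_range] at hp
    show p1 + p2 * n ∈ Finset.range (N - n + 1)
    rw [Finset.mem_range]
    obtain ⟨h1, h2⟩ := hp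
    have h3 : (p2 + 1) * n ≤ N - p1 := (Nat.le_div_iff_mul_le hn0).mp h2
    rw [add_mul, one_mul] at h3
    have h5 : p1 ≤ N := le_trans (le_of_lt h1) hN
    generalize p2 * n = A at *
    omega
  · intro k _
    show k % n + k / n * n = k
    exact Nat.mod_add_div' k n
  · rintro ⟨p1, p2⟩ hp
    rw [Finset.mem_sigma, Finset.mem_range, Finset.mem_range] at hp
    have h1 : (p1 + p2 * n) % n = p1 := by
      rw [Nat.add_mul_mod_self_right, Nat.mod_eq_of_lt hp.1]
    have h2 : (p1 + p2 * n) / n = p2 := by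
      rw [Nat.add_mul_div_right _ _ hn0, Nat.div_eq_of_lt hp.1, zero_add]
    simp [h1, h2]
  · intro k _
    show g k = g (k % n + k / n * n)
    rw [Nat.mod_add_div']


open Filter Finset Real

lemma aux_limsup_le {X : Type*} (F : ℕ → Finset X)
    (hF : ∀ N, 1 ≤ N → (F N).Nonempty)
    (a b : ℕ → X → ℝ) (C : ℝ) (N₀ : ℕ)
    (hab : ∀ N, N₀ ≤ N → ∀ x ∈ F N, a N x ≤ b N x + C) :
    limsup (fun N : ℕ => (((N : ℝ)⁻¹ * Real.log (∑ x ∈ F N, Real.exp (a N x)) : ℝ) : EReal)) atTop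
      ≤ limsup (fun N : ℕ => (((N : ℝ)⁻¹ * Real.log (∑ x ∈ F N, Real.exp (b N x)) : ℝ) : EReal)) atTop := by
  set u : ℕ → ℝ := fun N => ((N : ℝ)⁻¹ * Real.log (∑ x ∈ F N, Real.exp (b N x)) : ℝ) with hu
  set v : ℕ → ℝ := fun N => (C * (N : ℝ)⁻¹ : ℝ) with hv
  have hvlim : Tendsto (fun N : ℕ => ((v N : ℝ) : EReal)) atTop (nhds (0 : EReal)) := by
    have h1 : Tendsto v atTop (nhds (C * 0)) :=
      tendsto_inv_atTop_nhds_zero_nat.const_mul C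
    rw [mul_zero] at h1
    simpa using EReal.tendsto_coe.2 h1
  have hv0 : limsup (fun N : ℕ => ((v N : ℝ) : EReal)) atTop = 0 := hvlim.limsup_eq
  have key : ∀ᶠ N : ℕ in atTop,
      (((N : ℝ)⁻¹ * Real.log (∑ x ∈ F N, Real.exp (a N x)) : ℝ) : EReal)
        ≤ ((fun N => ((u N : EReal) + ((v N : ℝ) : EReal))) N) := by
    filter_upwards [eventually_ge_atTop (max N₀ 1)] with N hN
    have hN₀ : N₀ ≤ N := le_trans (le_max_left _ _) hN
    have hN1 : 1 ≤ N := le_trans (le_max_right _ _) hN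
    have hpos : 0 < ∑ x ∈ F N, Real.exp (b N x) :=
      Finset.sum_pos (fun x _ => Real.exp_pos _) (hF N hN1)
    have hsum : ∑ x ∈ F N, Real.exp (a N x) ≤ (∑ x ∈ F N, Real.exp (b N x)) * Real.exp C := by
      rw [Finset.sum_mul]
      refine Finset.sum_le_sum fun x hx => ?_
      rw [← Real.exp_add]; exact Real.exp_le_exp.2 (hab N hN₀ x hx)
    have hlog : Real.log (∑ x ∈ F N, Real.exp (a N x))
        ≤ Real.log (∑ x ∈ F N, Real.exp (b N x)) + C := by
      calc Real.log (∑ x ∈ F N, Real.exp (a N x))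
          ≤ Real.log ((∑ x ∈ F N, Real.exp (b N x)) * Real.exp C) :=
            Real.log_le_log (Finset.sum_pos (fun x _ => Real.exp_pos _) (hF N hN1)) hsum
        _ = _ := by rw [Real.log_mul (ne_of_gt hpos) (Real.exp_ne_zero C), Real.log_exp]
    have hre : (N : ℝ)⁻¹ * Real.log (∑ x ∈ F N, Real.exp (a N x)) ≤ u N + v N := by
      have h2 := mul_le_mul_of_nonneg_left hlog (inv_nonneg.2 (Nat.cast_nonneg N))
      simp only [hu, hv, mul_add]
      calc (N : ℝ)⁻¹ * Real.log (∑ x ∈ F N, Real.exp (a N x))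
          ≤ (N : ℝ)⁻¹ * (Real.log (∑ x ∈ F N, Real.exp (b N x)) + C) := h2
        _ = (N : ℝ)⁻¹ * Real.log (∑ x ∈ F N, Real.exp (b N x)) + C * (N : ℝ)⁻¹ := by ring
    rw [← EReal.coe_add]
    exact_mod_cast hre
  calc limsup (fun N : ℕ => (((N : ℝ)⁻¹ * Real.log (∑ x ∈ F N, Real.exp (a N x)) : ℝ) : EReal)) atTop
      ≤ limsup (fun N => ((u N : EReal) + ((v N : ℝ) : EReal))) atTop :=
        Filter.limsup_le_limsup key
    _ ≤ limsup (fun N => (u N : EReal)) atTop + limsup (fun N : ℕ => ((v N : ℝ) : EReal)) atTop := by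
        refine EReal.limsup_add_le ?_ ?_
        · right; rw [hv0]; exact EReal.zero_ne_top
        · right; rw [hv0]; exact EReal.zero_ne_bot
    _ = limsup (fun N => (u N : EReal)) atTop := by rw [hv0, add_zero]


open Filter Finset Real

section helpers
variable {X : Type*} (f : X → X) (ψ : ℕ → X → ℝ)

lemma auxIneq1 (n : ℕ) (hn : 1 ≤ n) (M : ℝ)
    (hM1 : ∀ x, |ψ 1 x| ≤ M)
    (hsa : ∀ n, 1 ≤ n → ∀ m, 1 ≤ m → ∀ x : X, ψ n x + ψ m (f^[n] x) ≤ ψ (n+m) x) :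
    ∀ N x, ∑ k ∈ Finset.range N, ψ 1 (f^[k] x)
      ≤ (n:ℝ)⁻¹ * ∑ k ∈ Finset.range N, ψ n (f^[k] x) + 2 * n * M := by
  intro N x
  have hM0 : 0 ≤ M := le_trans (abs_nonneg _) (hM1 x)
  have h1 : ∀ k, ∑ j ∈ Finset.range n, ψ 1 (f^[j + k] x) ≤ ψ n (f^[k] x) := by
    intro k
    have := auxA f ψ hsa n hn (f^[k] x)
    simpa only [← Function.iterate_add_apply] using this
  have h2 : ∑ k ∈ Finset.range N, ∑ j ∈ Finset.range n, ψ 1 (f^[j + k] x)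
      ≤ ∑ k ∈ Finset.range N, ψ n (f^[k] x) :=
    Finset.sum_le_sum (fun k _ => h1 k)
  rw [Finset.sum_comm] at h2
  have h3 : ∀ j ∈ Finset.range n,
      ∑ k ∈ Finset.range N, ψ 1 (f^[k] x) - 2 * n * M
        ≤ ∑ k ∈ Finset.range N, ψ 1 (f^[j + k] x) := by
    intro j hj
    rw [Finset.mem_range] at hj
    have e1 : ∑ k ∈ Finset.Ico j (N + j), ψ 1 (f^[k] x)
        = ∑ k ∈ Finset.range N, ψ 1 (f^[j + k] x) := by
      rw [Finset.sum_Ico_eq_sum_range]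
      simp
    have e2 : ∑ k ∈ Finset.range N, ψ 1 (f^[k] x) + ∑ k ∈ Finset.Ico N (N + j), ψ 1 (f^[k] x)
        = ∑ k ∈ Finset.range j, ψ 1 (f^[k] x) + ∑ k ∈ Finset.Ico j (N + j), ψ 1 (f^[k] x) := by
      have ha := Finset.sum_Ico_consecutive (fun k => ψ 1 (f^[k] x))
        (Nat.zero_le N) (Nat.le_add_right N j)
      have hb := Finset.sum_Ico_consecutive (fun k => ψ 1 (f^[k] x))
        (Nat.zero_le j) (Nat.le_add_left j N)
      simp only [← Finset.range_eq_Ico] at ha hb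
      rw [ha, hb]
    have b1 : |∑ k ∈ Finset.Ico N (N+j), ψ 1 (f^[k] x)| ≤ ((Finset.Ico N (N+j)).card : ℝ) * M :=
      auxBound (fun k _ => hM1 _)
    have b2 : |∑ k ∈ Finset.range j, ψ 1 (f^[k] x)| ≤ ((Finset.range j).card : ℝ) * M :=
      auxBound (fun k _ => hM1 _)
    rw [Nat.card_Ico, Nat.add_sub_cancel_left] at b1
    rw [Finset.card_range] at b2
    have b1' := abs_le.mp b1
    have b2' := abs_le.mp b2
    have hjM : (j:ℝ) * M ≤ (n:ℝ) * M := by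
      have hjn : (j:ℝ) ≤ (n:ℝ) := by exact_mod_cast le_of_lt hj
      nlinarith
    linarith [e1, e2]
  have h4 := le_trans (Finset.sum_le_sum h3) h2
  rw [Finset.sum_const, Finset.card_range, nsmul_eq_mul] at h4
  have hn' : (0:ℝ) < n := by exact_mod_cast hn
  have h5 : ∑ k ∈ Finset.range N, ψ 1 (f^[k] x) - 2 * n * M
      ≤ (n:ℝ)⁻¹ * ∑ k ∈ Finset.range N, ψ n (f^[k] x) := by
    rw [le_inv_mul_iff₀ hn']
    exact h4
  linarith

lemma auxIneq2 (n : ℕ) (hn : 1 ≤ n) (M : ℝ) (hM0 : 0 ≤ M)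
    (hM : ∀ j, 1 ≤ j → j ≤ n → ∀ x, |ψ j x| ≤ M)
    (hsa : ∀ n, 1 ≤ n → ∀ m, 1 ≤ m → ∀ x : X, ψ n x + ψ m (f^[n] x) ≤ ψ (n+m) x) :
    ∀ N, n ≤ N → ∀ x, (n:ℝ)⁻¹ * ∑ k ∈ Finset.range N, ψ n (f^[k] x) ≤ ψ N x + 3 * M := by
  intro N hN x
  have hn' : (0:ℝ) < n := by exact_mod_cast hn
  have hsplit : ∑ k ∈ Finset.range N, ψ n (f^[k] x)
      = ∑ k ∈ Finset.range (N - n + 1), ψ n (f^[k] x)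
        + ∑ k ∈ Finset.Ico (N - n + 1) N, ψ n (f^[k] x) := by
    have h := Finset.sum_Ico_consecutive (fun k => ψ n (f^[k] x))
      (Nat.zero_le (N - n + 1)) (show N - n + 1 ≤ N by omega)
    simp only [← Finset.range_eq_Ico] at h
    exact h.symm
  have hbij := auxBij (fun k => ψ n (f^[k] x)) n N hn hN
  have hper : ∀ i ∈ Finset.range n,
      ∑ j ∈ Finset.range ((N - i)/n), ψ n (f^[i + j*n] x) ≤ ψ N x + 2*M := by
    intro i hi
    rw [Finset.mem_range] at hi
    have hNi : 1 ≤ N - i := by omega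
    have hE := auxE f ψ n hn M hM0 hM hsa (N - i) hNi (f^[i] x)
    have hrw : ∀ j : ℕ, ψ n (f^[i + j*n] x) = ψ n (f^[j*n] (f^[i] x)) := by
      intro j; rw [add_comm, Function.iterate_add_apply]
    rw [Finset.sum_congr rfl (fun j _ => hrw j)]
    rcases Nat.eq_zero_or_pos i with rfl | hi1
    · simp only [Nat.sub_zero, Function.iterate_zero_apply] at hE ⊢
      linarith
    · have hs := hsa i hi1 (N - i) hNi x
      rw [Nat.add_sub_cancel' (show i ≤ N by omega)] at hs
      have hMi := (abs_le.mp (hM i hi1 (le_of_lt hi) x)).1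
      linarith
  have hmain := Finset.sum_le_sum hper
  rw [Finset.sum_const, Finset.card_range, nsmul_eq_mul] at hmain
  have htail : ∑ k ∈ Finset.Ico (N-n+1) N, ψ n (f^[k] x) ≤ (n:ℝ) * M := by
    have hb : |∑ k ∈ Finset.Ico (N-n+1) N, ψ n (f^[k] x)|
        ≤ ((Finset.Ico (N-n+1) N).card : ℝ) * M := auxBound (fun k _ => hM n hn le_rfl _)
    have hcard : (Finset.Ico (N-n+1) N).card = n - 1 := by rw [Nat.card_Ico]; omega
    rw [hcard] at hb
    have h1 := (abs_le.mp hb).2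
    have h2 : ((n - 1 : ℕ) : ℝ) * M ≤ (n:ℝ) * M := by
      have : ((n-1:ℕ):ℝ) ≤ (n:ℝ) := by exact_mod_cast Nat.sub_le n 1
      nlinarith
    linarith
  rw [inv_mul_le_iff₀ hn']
  have hring : (n:ℝ) * (ψ N x + 3 * M) = (n:ℝ) * (ψ N x + 2*M) + (n:ℝ) * M := by ring
  rw [hsplit, hbij, hring]
  linarith

end helpers

/-- For a continuous map `f` of a compact metric space, a super-additive sequence
`(ψ_n)_{n≥1}` of continuous functions, a fixed `n ≥ 1`, and any sequence `(F_N)_{N≥1}` of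
nonempty finite subsets of `X`:
`limsup_N (1/N) log Σ_{x∈F_N} exp(S_N ψ_1(x))
  ≤ limsup_N (1/N) log Σ_{x∈F_N} exp((1/n)·S_N ψ_n(x))
  ≤ limsup_N (1/N) log Σ_{x∈F_N} exp(ψ_N(x))`. -/
theorem limsup_finset_sums_chain
    {X : Type*} [MetricSpace X] [CompactSpace X]
    (f : X → X) (hf : Continuous f)
    (ψ : ℕ → X → ℝ) (hcont : ∀ n, 1 ≤ n → Continuous (ψ n))
    (hsa : ∀ n, 1 ≤ n → ∀ m, 1 ≤ m → ∀ x : X,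
      ψ n x + ψ m (f^[n] x) ≤ ψ (n + m) x)
    (n : ℕ) (hn : 1 ≤ n)
    (F : ℕ → Finset X) (hF : ∀ N, 1 ≤ N → (F N).Nonempty) :
    Filter.limsup (fun N : ℕ =>
        (((N : ℝ)⁻¹ * Real.log (∑ x ∈ F N,
          Real.exp (∑ k ∈ Finset.range N, ψ 1 (f^[k] x))) : ℝ) : EReal)) Filter.atTop
      ≤ Filter.limsup (fun N : ℕ =>
        (((N : ℝ)⁻¹ * Real.log (∑ x ∈ F N,
          Real.exp ((n : ℝ)⁻¹ * ∑ k ∈ Finset.range N, ψ n (f^[k] x))) : ℝ) : EReal))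
          Filter.atTop ∧
    Filter.limsup (fun N : ℕ =>
        (((N : ℝ)⁻¹ * Real.log (∑ x ∈ F N,
          Real.exp ((n : ℝ)⁻¹ * ∑ k ∈ Finset.range N, ψ n (f^[k] x))) : ℝ) : EReal))
          Filter.atTop
      ≤ Filter.limsup (fun N : ℕ =>
        (((N : ℝ)⁻¹ * Real.log (∑ x ∈ F N, Real.exp (ψ N x)) : ℝ) : EReal))
          Filter.atTop := by
  have hBj : ∀ j : ℕ, ∃ C : ℝ, 0 ≤ C ∧ (1 ≤ j → j ≤ n → ∀ x, |ψ j x| ≤ C) := by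
    intro j
    by_cases hj : 1 ≤ j ∧ j ≤ n
    · obtain ⟨C, hC⟩ := IsCompact.exists_bound_of_continuousOn isCompact_univ
        (hcont j hj.1).continuousOn
      exact ⟨max C 0, le_max_right _ _,
        fun _ _ x => (hC x (Set.mem_univ x)).trans (le_max_left _ _)⟩
    · exact ⟨0, le_rfl, fun h1 h2 => absurd ⟨h1, h2⟩ hj⟩
  choose Cf hCf0 hCf using hBj
  set M := ∑ j ∈ Finset.Icc 1 n, Cf j with hMdef
  have hM0 : 0 ≤ M := Finset.sum_nonneg fun j _ => hCf0 j
  have hM : ∀ j, 1 ≤ j → j ≤ n → ∀ x, |ψ j x| ≤ M := by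
    intro j h1 h2 x
    calc |ψ j x| ≤ Cf j := hCf j h1 h2 x
      _ ≤ M := Finset.single_le_sum (f := Cf) (fun i _ => hCf0 i)
        (Finset.mem_Icc.mpr ⟨h1, h2⟩)
  have hM1 : ∀ x, |ψ 1 x| ≤ M := fun x => hM 1 le_rfl hn x
  constructor
  · exact aux_limsup_le F hF
      (fun N x => ∑ k ∈ Finset.range N, ψ 1 (f^[k] x))
      (fun N x => (n : ℝ)⁻¹ * ∑ k ∈ Finset.range N, ψ n (f^[k] x))
      (2 * n * M) 0
      (fun N _ x _ => auxIneq1 f ψ n hn M hM1 hsa N x)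
  · exact aux_limsup_le F hF
      (fun N x => (n : ℝ)⁻¹ * ∑ k ∈ Finset.range N, ψ n (f^[k] x))
      (fun N x => ψ N x)
      (3 * M) n
      (fun N hN x _ => auxIneq2 f ψ n hn M hM0 hM hsa N hN x)
end

section
/- Let (X, d) be a compact metric space, f : X → X continuous, let Ψ = (ψ_n)_{n≥1} be a super-additive sequence with respect to f of continuous functions ψ_n : X → ℝ, let k ≥ 1, and let ν be a Borel probability measure on X that is invariant under f^k (but not necessarily under f). Then the sequence ((1/n)·∫ψ_n dν)_{n≥1} converges in ℝ ∪ {+∞}, and its limit equals sup_{m≥1} (1/(km))·∫ψ_{km} dν. -/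
open MeasureTheory Filter

lemma fekete_aux (a : ℕ → ℝ) (k : ℕ) (hk : 1 ≤ k) (C : ℝ) (hC : 0 ≤ C)
    (H1 : ∀ n m, 1 ≤ n → 1 ≤ m → k ∣ n → a n + a m ≤ a (n + m))
    (H2 : ∀ n m, 1 ≤ n → 1 ≤ m → m ≤ k → a n ≤ a (n + m) + C) :
    Tendsto (fun n : ℕ => (((n : ℝ)⁻¹ * a n : ℝ) : EReal)) atTop
      (nhds (⨆ (m : ℕ) (_ : 1 ≤ m),
        ((((k * m : ℕ) : ℝ)⁻¹ * a (k * m) : ℝ) : EReal))) := by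
  set L : EReal := ⨆ (m : ℕ) (_ : 1 ≤ m), ((((k * m : ℕ) : ℝ)⁻¹ * a (k * m) : ℝ) : EReal) with hL
  -- key superadditive iteration lemma
  have key : ∀ p, 1 ≤ p → k ∣ p → ∀ q r : ℕ, 1 ≤ r → (q : ℝ) * a p + a r ≤ a (p * q + r) := by
    intro p hp hdvd q
    induction q with
    | zero => intro r hr; simp
    | succ q ih =>
      intro r hr
      have h1 := ih r hr
      have h2 := H1 p (p * q + r) hp (le_trans hr (Nat.le_add_left _ _)) hdvd
      have : p * (q + 1) + r = p + (p * q + r) := by ring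
      rw [this]
      push_cast
      linarith
  -- lower bound: for every p multiple of k, liminf-type bound
  have lower : ∀ p, 1 ≤ p → k ∣ p → ∀ n : ℕ, 1 ≤ n →
      (p : ℝ)⁻¹ * a p - (|a p| + ∑ i ∈ Finset.Icc 1 p, |a i|) / n ≤ (n : ℝ)⁻¹ * a n := by
    intro p hp hdvd n hn
    set Cp := ∑ i ∈ Finset.Icc 1 p, |a i| with hCp
    set q := (n - 1) / p with hq
    set r := (n - 1) % p + 1 with hr
    have hp0 : 0 < p := hp
    have hn1 : n = p * q + r := by
      have h := Nat.div_add_mod (n - 1) p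
      simp only [hq, hr]
      omega
    have hr1 : 1 ≤ r := Nat.le_add_left 1 _
    have hrp : r ≤ p := by
      have := Nat.mod_lt (n - 1) hp0
      omega
    have hkey := key p hp hdvd q r hr1
    rw [← hn1] at hkey
    have har : -Cp ≤ a r := by
      have h1 : |a r| ≤ Cp := by
        refine Finset.single_le_sum (f := fun i => |a i|) (fun i _ => abs_nonneg _) ?_
        simp [Finset.mem_Icc, hr1, hrp]
      have := neg_abs_le (a r)
      linarith
    have hpn : (0:ℝ) < p := by exact_mod_cast hp0
    have hnn : (0:ℝ) < n := by exact_mod_cast hn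
    have hqn : (q : ℝ) = ((n : ℝ) - r) / p := by
      field_simp
      rw [hn1]; push_cast; ring
    have hrRle : (r : ℝ) ≤ p := by exact_mod_cast hrp
    have hrR1 : (1:ℝ) ≤ r := by exact_mod_cast hr1
    have hqb : (n / p : ℝ) * a p - |a p| ≤ (q : ℝ) * a p := by
      have h : (q : ℝ) * a p - (n / p : ℝ) * a p = (-(r:ℝ)/p) * a p := by
        rw [hqn]; ring
      have habs : |(-(r:ℝ)/p) * a p| ≤ |a p| := by
        rw [abs_mul]
        have : |(-(r:ℝ)/p)| ≤ 1 := by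
          rw [abs_div, abs_neg, abs_of_pos hpn, abs_of_pos (by linarith : (0:ℝ) < r),
            div_le_one hpn]
          exact hrRle
        nlinarith [abs_nonneg (a p)]
      have := neg_abs_le ((-(r:ℝ)/p) * a p)
      linarith
    -- combine: a n ≥ (n/p) a p - |a p| - Cp
    have han : (n / p : ℝ) * a p - |a p| - Cp ≤ a n := by linarith
    have expand : (n:ℝ)⁻¹ * a n - ((p : ℝ)⁻¹ * a p - (|a p| + Cp) / n)
        = (n:ℝ)⁻¹ * (a n - ((n / p : ℝ) * a p - |a p| - Cp)) := by
      field_simp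
      ring
    have h0 : 0 ≤ (n:ℝ)⁻¹ * (a n - ((n / p : ℝ) * a p - |a p| - Cp)) :=
      mul_nonneg (inv_nonneg.2 hnn.le) (by linarith)
    linarith
  -- upper bound
  have hub : ∀ l : ℝ, (∀ m : ℕ, 1 ≤ m → a (k * m) ≤ ((k * m : ℕ) : ℝ) * l) →
      ∀ n : ℕ, k + 1 ≤ n → a n ≤ (n : ℝ) * l + (k * |l| + C) := by
    intro l hl n hn
    set m' := (n - 1) / k with hm'
    set r := (n - 1) % k + 1 with hr
    have hk0 : 0 < k := hk
    have hn1 : n = k * m' + r := by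
      have h := Nat.div_add_mod (n - 1) k
      simp only [hm', hr]
      omega
    have hr1 : 1 ≤ r := Nat.le_add_left 1 _
    have hrk : r ≤ k := by
      have := Nat.mod_lt (n - 1) hk0
      omega
    have hm1 : 1 ≤ m' := by
      rw [hm']
      exact Nat.one_le_div_iff hk0 |>.2 (by omega)
    have hkl : 0 ≤ (k : ℝ) * |l| := mul_nonneg (by positivity) (abs_nonneg _)
    rcases eq_or_lt_of_le hrk with heq | hlt
    · -- r = k, n = k * (m' + 1)
      have hn2 : n = k * (m' + 1) := by
        have hmul : k * (m' + 1) = k * m' + k := by ring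
        omega
      have := hl (m' + 1) (by omega)
      rw [← hn2] at this
      linarith
    · -- r < k
      set s := k - r with hs
      have hs1 : 1 ≤ s := by omega
      have hsk : s ≤ k := by omega
      have h2 := H2 n s (by omega) hs1 hsk
      have hn2 : n + s = k * (m' + 1) := by
        have hmul : k * (m' + 1) = k * m' + k := by ring
        omega
      have h3 := hl (m' + 1) (by omega)
      rw [← hn2] at h3
      have hsl : (s : ℝ) * l ≤ (k : ℝ) * |l| := by
        have h4 : (s : ℝ) ≤ k := by exact_mod_cast hsk
        have h5 : (0:ℝ) ≤ s := by positivity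
        have h6 := le_abs_self l
        have h7 := neg_abs_le l
        nlinarith [abs_nonneg l]
      have hcast : ((n + s : ℕ) : ℝ) = (n : ℝ) + s := by push_cast; ring
      rw [hcast] at h3
      nlinarith
  -- the coercion of m = 1 term shows L ≠ ⊥
  have hLne : ((((k * 1 : ℕ) : ℝ)⁻¹ * a (k * 1) : ℝ) : EReal) ≤ L := by
    rw [hL]
    exact le_iSup₂ (f := fun (m : ℕ) (_ : 1 ≤ m) =>
      ((((k * m : ℕ) : ℝ)⁻¹ * a (k * m) : ℝ) : EReal)) 1 le_rfl
  rw [tendsto_order]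
  constructor
  · intro b hb
    simp only [hL, lt_iSup_iff] at hb
    obtain ⟨m, hm, hbm⟩ := hb
    set p := k * m with hpdef
    have hp : 1 ≤ p := Nat.one_le_iff_ne_zero.2 (by positivity)
    have hdvd : k ∣ p := Dvd.intro m rfl
    obtain ⟨c, hc1, hc2⟩ := exists_between hbm
    lift c to ℝ using ⟨ne_top_of_lt hc2, (lt_of_le_of_lt bot_le hc1).ne'⟩
    have hclt : c < (p : ℝ)⁻¹ * a p := by exact_mod_cast hc2
    set Cp := ∑ i ∈ Finset.Icc 1 p, |a i| with hCp
    have htend : Tendsto (fun n : ℕ => (p : ℝ)⁻¹ * a p - (|a p| + Cp) / n) atTop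
        (nhds ((p : ℝ)⁻¹ * a p)) := by
      have h1 : Tendsto (fun n : ℕ => (|a p| + Cp) / (n : ℝ)) atTop (nhds 0) :=
        tendsto_const_div_atTop_nhds_zero_nat _
      have := (tendsto_const_nhds (x := (p : ℝ)⁻¹ * a p) (f := atTop (α := ℕ))).sub h1
      simpa using this
    have hev := htend.eventually_const_lt hclt
    filter_upwards [hev, eventually_ge_atTop 1] with n h1 h2
    have h3 : c < (n : ℝ)⁻¹ * a n := lt_of_lt_of_le h1 (lower p hp hdvd n h2)
    exact hc1.trans (by exact_mod_cast h3)
  · intro b hb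
    have hLtop : L ≠ ⊤ := ne_top_of_lt hb
    have hLbot : L ≠ ⊥ := (lt_of_lt_of_le (EReal.bot_lt_coe _) hLne).ne'
    obtain ⟨l, hl⟩ : ∃ l : ℝ, L = (l : EReal) := ⟨L.toReal, (EReal.coe_toReal hLtop hLbot).symm⟩
    have hml : ∀ m : ℕ, 1 ≤ m → a (k * m) ≤ ((k * m : ℕ) : ℝ) * l := by
      intro m hm
      have h1 : ((((k * m : ℕ) : ℝ)⁻¹ * a (k * m) : ℝ) : EReal) ≤ L := by
        rw [hL]
        exact le_iSup₂ (f := fun (m : ℕ) (_ : 1 ≤ m) =>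
          ((((k * m : ℕ) : ℝ)⁻¹ * a (k * m) : ℝ) : EReal)) m hm
      rw [hl] at h1
      have h2 : ((k * m : ℕ) : ℝ)⁻¹ * a (k * m) ≤ l := by exact_mod_cast h1
      have h3 : (0:ℝ) < ((k * m : ℕ) : ℝ) := by
        have : 0 < k * m := by positivity
        exact_mod_cast this
      have h4 := mul_le_mul_of_nonneg_left h2 h3.le
      rw [← mul_assoc, mul_inv_cancel₀ h3.ne', one_mul] at h4
      exact h4
    obtain ⟨c, hc1, hc2⟩ := exists_between hb
    lift c to ℝ using ⟨ne_top_of_lt hc2, (lt_of_le_of_lt bot_le hc1).ne'⟩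
    have hlc : l < c := by rw [hl] at hc1; exact_mod_cast hc1
    have htend : Tendsto (fun n : ℕ => l + ((k : ℝ) * |l| + C) / n) atTop (nhds l) := by
      have h1 : Tendsto (fun n : ℕ => ((k : ℝ) * |l| + C) / (n : ℝ)) atTop (nhds 0) :=
        tendsto_const_div_atTop_nhds_zero_nat _
      have := (tendsto_const_nhds (x := l) (f := atTop (α := ℕ))).add h1
      simpa using this
    have hev := htend.eventually_lt_const hlc
    filter_upwards [hev, eventually_ge_atTop (k + 1)] with n h1 h2
    have hnn : (0:ℝ) < n := by
      have : 0 < n := by omega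
      exact_mod_cast this
    have h4 : (n : ℝ)⁻¹ * a n ≤ l + ((k : ℝ) * |l| + C) / n := by
      have h5 := hub l hml n h2
      have h6 := mul_le_mul_of_nonneg_left h5 (inv_nonneg.2 hnn.le)
      have h7 : (n:ℝ)⁻¹ * ((n : ℝ) * l + ((k:ℝ) * |l| + C)) = l + ((k:ℝ) * |l| + C) / n := by
        field_simp
      linarith
    calc (((n : ℝ)⁻¹ * a n : ℝ) : EReal) ≤ ((l + ((k : ℝ) * |l| + C) / n : ℝ) : EReal) := by
          exact_mod_cast h4
      _ < ((c : ℝ) : EReal) := by exact_mod_cast h1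
      _ < b := hc2

/-- For a continuous map `f` of a compact metric space, a super-additive sequence
`(ψ_n)_{n≥1}` of continuous functions, `k ≥ 1`, and a Borel probability measure `ν`
invariant under `f^k` (but not necessarily under `f`), the sequence
`((1/n)·∫ψ_n dν)_{n≥1}` converges in `ℝ ∪ {+∞}` and its limit equals
`sup_{m≥1} (1/(km))·∫ψ_{km} dν`. -/
theorem integral_superadditive_tendsto_sup_iterate
    {X : Type*} [MetricSpace X] [CompactSpace X] [MeasurableSpace X] [BorelSpace X]
    (f : X → X) (hf : Continuous f)
    (ψ : ℕ → X → ℝ) (hcont : ∀ n, 1 ≤ n → Continuous (ψ n))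
    (hsa : ∀ n, 1 ≤ n → ∀ m, 1 ≤ m → ∀ x : X,
      ψ n x + ψ m (f^[n] x) ≤ ψ (n + m) x)
    (k : ℕ) (hk : 1 ≤ k)
    (ν : Measure X) [IsProbabilityMeasure ν]
    (hν : MeasurePreserving (f^[k]) ν ν) :
    Filter.Tendsto
      (fun n : ℕ => (((n : ℝ)⁻¹ * ∫ x, ψ n x ∂ν : ℝ) : EReal)) Filter.atTop
      (nhds (⨆ (m : ℕ) (_ : 1 ≤ m),
        ((((k * m : ℕ) : ℝ)⁻¹ * ∫ x, ψ (k * m) x ∂ν : ℝ) : EReal))) := by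
  -- integrability facts
  have hint : ∀ n, 1 ≤ n → Integrable (ψ n) ν := by
    intro n hn
    have := ((hcont n hn).continuousOn.integrableOn_compact (μ := ν) isCompact_univ)
    rwa [integrableOn_univ] at this
  have hintc : ∀ (n m : ℕ), 1 ≤ m → Integrable (fun x => ψ m (f^[n] x)) ν := by
    intro n m hm
    have hc : Continuous (fun x => ψ m (f^[n] x)) := (hcont m hm).comp (hf.iterate n)
    have := (hc.continuousOn.integrableOn_compact (μ := ν) isCompact_univ)
    rwa [integrableOn_univ] at this
  -- invariance of integrals under f^[k*j]
  have hmp : ∀ j : ℕ, MeasurePreserving (f^[k * j]) ν ν := by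
    intro j
    rw [Function.iterate_mul]
    exact hν.iterate j
  have hinv : ∀ (j m : ℕ), 1 ≤ m →
      ∫ x, ψ m (f^[k * j] x) ∂ν = ∫ x, ψ m x ∂ν := by
    intro j m hm
    conv_rhs => rw [← (hmp j).map_eq]
    rw [integral_map ((hmp j).measurable.aemeasurable)
      ((hcont m hm).aestronglyMeasurable)]
  -- superadditivity of integrals (with a divisibility condition)
  have H1 : ∀ n m, 1 ≤ n → 1 ≤ m → k ∣ n →
      (∫ x, ψ n x ∂ν) + (∫ x, ψ m x ∂ν) ≤ ∫ x, ψ (n + m) x ∂ν := by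
    intro n m hn hm hdvd
    obtain ⟨j, hj⟩ := hdvd
    have h3 : ∫ x, (ψ n x + ψ m (f^[n] x)) ∂ν ≤ ∫ x, ψ (n + m) x ∂ν :=
      integral_mono ((hint n hn).add (hintc n m hm)) (hint (n + m) (by omega))
        (hsa n hn m hm)
    rw [integral_add (hint n hn) (hintc n m hm)] at h3
    have h4 : ∫ x, ψ m (f^[n] x) ∂ν = ∫ x, ψ m x ∂ν := by
      subst hj; exact hinv j m hm
    rwa [h4] at h3
  -- uniform bound on ψ_m, 1 ≤ m ≤ k
  have hB : ∀ m : ℕ, ∃ B : ℝ, 1 ≤ m → ∀ x, |ψ m x| ≤ B := by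
    intro m
    by_cases hm : 1 ≤ m
    · obtain ⟨B, hB⟩ :=
        (isCompact_univ (X := X)).exists_bound_of_continuousOn ((hcont m hm).continuousOn)
      exact ⟨B, fun _ x => by simpa [Real.norm_eq_abs] using hB x (Set.mem_univ x)⟩
    · exact ⟨0, fun h => absurd h hm⟩
  choose B hBspec using hB
  set C := ∑ i ∈ Finset.Icc 1 k, |B i| with hCdef
  have hC : 0 ≤ C := Finset.sum_nonneg (fun i _ => abs_nonneg _)
  have hBC : ∀ m, 1 ≤ m → m ≤ k → ∀ x : X, -C ≤ ψ m x := by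
    intro m h1 h2 x
    have h3 : |B m| ≤ C :=
      Finset.single_le_sum (f := fun i => |B i|) (fun i _ => abs_nonneg _)
        (by simp [Finset.mem_Icc, h1, h2])
    have h4 := (abs_le.1 (hBspec m h1 x)).1
    have h5 := le_abs_self (B m)
    linarith
  have H2 : ∀ n m, 1 ≤ n → 1 ≤ m → m ≤ k →
      (∫ x, ψ n x ∂ν) ≤ (∫ x, ψ (n + m) x ∂ν) + C := by
    intro n m hn hm hmk
    have h3 : ∫ x, (ψ n x + ψ m (f^[n] x)) ∂ν ≤ ∫ x, ψ (n + m) x ∂ν :=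
      integral_mono ((hint n hn).add (hintc n m hm)) (hint (n + m) (by omega))
        (hsa n hn m hm)
    rw [integral_add (hint n hn) (hintc n m hm)] at h3
    have h5 : (-C : ℝ) ≤ ∫ x, ψ m (f^[n] x) ∂ν := by
      have h6 := integral_mono (integrable_const (-C)) (hintc n m hm)
        (fun x => hBC m hm hmk (f^[n] x))
      simpa using h6
    linarith
  exact fekete_aux (fun n => ∫ x, ψ n x ∂ν) k hk C hC H1 H2
end
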